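/- Let 𝓛 ⊆ 𝒫(ℕ) be a subadditive family with accepted nonzero elasticity ρ, let L ∈ 𝓛 with ρ(L) = ρ, and set n := inf L. Then for all k ∈ ℕ⁺: ρ_{nk} = nkρ and λ_{nkρ} = nk, where ρ_j := sup 𝒰_j, λ_j := inf 𝒰_j, 𝒰_j := ⋃ {L' ∈ 𝓛 : j ∈ L'}. (In particular nρ ∈ ℕ.) -/

import Mathlib

open Pointwise Set ENNReal

/-- A family of subsets of ℕ is *subadditive* if for all `L₁, L₂` in the family
there is `L` in the family with `L₁ + L₂ ⊆ L` (sumset). -/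
def Subadd (F : Set (Set ℕ)) : Prop :=
  ∀ L₁ ∈ F, ∀ L₂ ∈ F, ∃ L ∈ F, L₁ + L₂ ⊆ L

/-- The set of distances of `L ⊆ ℕ`. -/
def DeltaSet (L : Set ℕ) : Set ℕ :=
  {d | 1 ≤ d ∧ ∃ l ∈ L, L ∩ Set.Icc l (l + d) = {l, l + d}}

/-- The set of distances of a family. -/
def DeltaFam (F : Set (Set ℕ)) : Set ℕ := ⋃ L ∈ F, DeltaSet L

/-- Unions of sets of the family containing `k`. -/
def UU (F : Set (Set ℕ)) (k : ℕ) : Set ℕ := ⋃ L ∈ {L ∈ F | k ∈ L}, L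

/-- gcd of a set of naturals: the greatest common divisor (with `gcd ∅ = 0`,
realized since the set of common divisors of `∅` is unbounded and `sSup` of an
unbounded set of naturals is `0`). -/
noncomputable def setGcd (S : Set ℕ) : ℕ := sSup {d | ∀ x ∈ S, d ∣ x}

noncomputable def supE (L : Set ℕ) : ℝ≥0∞ := sSup ((fun n : ℕ => (n : ℝ≥0∞)) '' L)

noncomputable def infE (L : Set ℕ) : ℝ≥0∞ := sInf ((fun n : ℕ => (n : ℝ≥0∞)) '' L)

/-- The elasticity `ρ(L) = sup L / inf L⁺` of a set, computed in `ℝ≥0∞`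
(conventions `sup ∅ = 0`, `inf ∅ = ∞`, `a/∞ = 0`, `a/0 = ∞` for `a > 0` hold in `ℝ≥0∞`). -/
noncomputable def elast (L : Set ℕ) : ℝ≥0∞ := supE L / infE (L \ {0})

/-- The elasticity `ρ(𝓛)` of a family. -/
noncomputable def famElast (F : Set (Set ℕ)) : ℝ≥0∞ := ⨆ L ∈ F, elast L

noncomputable def USupE (F : Set (Set ℕ)) (k : ℕ) : ℝ≥0∞ := supE (UU F k)

noncomputable def UInfE (F : Set (Set ℕ)) (k : ℕ) : ℝ≥0∞ := infE (UU F k)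

noncomputable def supN (L : Set ℕ) : ℕ∞ := sSup ((fun n : ℕ => (n : ℕ∞)) '' L)

noncomputable def infN (L : Set ℕ) : ℕ∞ := sInf ((fun n : ℕ => (n : ℕ∞)) '' L)

/-- `k`-fold sumset. -/
def nfold : ℕ → Set ℕ → Set ℕ
  | 0, _ => {0}
  | n + 1, L => nfold n L + L

section Aux

lemma nfold_zero (L : Set ℕ) : nfold 0 L = {0} := rfl
lemma nfold_succ (t : ℕ) (L : Set ℕ) : nfold (t + 1) L = nfold t L + L := rfl

lemma le_supE {S : Set ℕ} {x : ℕ} (hx : x ∈ S) : (x : ℝ≥0∞) ≤ supE S :=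
  le_sSup ⟨x, hx, rfl⟩

lemma supE_le {S : Set ℕ} {a : ℝ≥0∞} (h : ∀ x ∈ S, (x : ℝ≥0∞) ≤ a) : supE S ≤ a := by
  apply sSup_le; rintro _ ⟨x, hx, rfl⟩; exact h x hx

lemma infE_le {S : Set ℕ} {x : ℕ} (hx : x ∈ S) : infE S ≤ (x : ℝ≥0∞) :=
  sInf_le ⟨x, hx, rfl⟩

lemma le_infE {S : Set ℕ} {a : ℝ≥0∞} (h : ∀ x ∈ S, a ≤ (x : ℝ≥0∞)) : a ≤ infE S := by
  apply le_sInf; rintro _ ⟨x, hx, rfl⟩; exact h x hx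

lemma elast_ge {L : Set ℕ} {a b : ℕ} (ha : a ∈ L) (hb : b ∈ L) (hb0 : b ≠ 0) :
    (a : ℝ≥0∞) / (b : ℝ≥0∞) ≤ elast L :=
  ENNReal.div_le_div (le_supE ha) (infE_le ⟨hb, hb0⟩)

lemma elast_le_fam {F : Set (Set ℕ)} {L : Set ℕ} (hL : L ∈ F) : elast L ≤ famElast F :=
  le_iSup₂ (f := fun L _ => elast L) L hL

lemma mem_nfold_mul {L : Set ℕ} {x : ℕ} (hx : x ∈ L) : ∀ t, t * x ∈ nfold t L
  | 0 => by simp [nfold_zero]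
  | t + 1 => by
    have h := mem_nfold_mul hx t
    have := Set.add_mem_add h hx
    simpa [nfold_succ, Nat.succ_mul] using this

lemma mem_nfold_of_zero {L : Set ℕ} (h0 : (0 : ℕ) ∈ L) {y : ℕ} (hy : y ∈ L) :
    ∀ t, y ∈ nfold (t + 1) L := by
  intro t
  induction t with
  | zero =>
    have : (0 : ℕ) ∈ nfold 0 L := by simp [nfold_zero]
    simpa [nfold_succ, nfold_zero] using Set.add_mem_add this hy
  | succ t ih =>
    simpa [nfold_succ] using Set.add_mem_add ih h0

lemma exists_nfold_subset {F : Set (Set ℕ)} (hF : Subadd F) {L : Set ℕ} (hL : L ∈ F) :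
    ∀ t : ℕ, ∃ L' ∈ F, nfold (t + 1) L ⊆ L' := by
  intro t
  induction t with
  | zero =>
    refine ⟨L, hL, ?_⟩
    intro x hx
    rw [nfold_succ, nfold_zero] at hx
    rcases hx with ⟨a, ha, b, hb, rfl⟩
    simp only [Set.mem_singleton_iff] at ha
    simpa [ha] using hb
  | succ t ih =>
    obtain ⟨L', hL', hsub⟩ := ih
    obtain ⟨L'', hL'', hsub2⟩ := hF L' hL' L hL
    exact ⟨L'', hL'', fun x hx =>
      hsub2 (Set.add_subset_add_right hsub (by rwa [← nfold_succ]))⟩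

lemma no_zero {F : Set (Set ℕ)} (hF : Subadd F) (hfin : famElast F < ⊤)
    {L' : Set ℕ} (hL' : L' ∈ F) (h0 : (0 : ℕ) ∈ L') {y : ℕ} (hy : y ∈ L') (hy0 : y ≠ 0) :
    False := by
  obtain ⟨t, ht⟩ := ENNReal.exists_nat_gt hfin.ne
  obtain ⟨L'', hL'', hsub⟩ := exists_nfold_subset hF hL' t
  have hty : (t + 1) * y ∈ L'' := hsub (mem_nfold_mul hy (t + 1))
  have hyy : y ∈ L'' := hsub (mem_nfold_of_zero h0 hy t)
  have hyne : (y : ℝ≥0∞) ≠ 0 := by exact_mod_cast hy0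
  have key : (((t + 1) * y : ℕ) : ℝ≥0∞) / (y : ℝ≥0∞) ≤ famElast F :=
    (elast_ge hty hyy hy0).trans (elast_le_fam hL'')
  have hcalc : (((t + 1) * y : ℕ) : ℝ≥0∞) / (y : ℝ≥0∞) = ((t : ℝ≥0∞) + 1) := by
    push_cast
    rw [mul_div_assoc, ENNReal.div_self hyne (by exact ENNReal.natCast_ne_top y), mul_one]
  rw [hcalc] at key
  have : (t : ℝ≥0∞) < (t : ℝ≥0∞) + 1 :=
    ENNReal.lt_add_right (ENNReal.natCast_ne_top t) one_ne_zero
  exact absurd (key.trans ht.le) (by simpa using this)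

end Aux

theorem stmt_14 (F : Set (Set ℕ)) (hF : Subadd F)
    (h1 : 1 ≤ famElast F) (hfin : famElast F < ⊤)
    (L : Set ℕ) (hL : L ∈ F) (hacc : elast L = famElast F) :
    ∃ m : ℕ, (m : ℝ≥0∞) = ((sInf L : ℕ) : ℝ≥0∞) * famElast F ∧
      ∀ k : ℕ, 0 < k →
        USupE F (sInf L * k) = ((sInf L * k : ℕ) : ℝ≥0∞) * famElast F ∧
          UInfE F (m * k) = ((sInf L * k : ℕ) : ℝ≥0∞) := by
  set ρ := famElast F with hρ
  have hρ0 : ρ ≠ 0 := by intro h; rw [h] at h1; exact absurd h1 (by simp)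
  have hρtop : ρ ≠ ⊤ := hfin.ne
  -- L has a nonzero element
  have hLnz : ∃ x ∈ L, x ≠ 0 := by
    by_contra h
    push_neg at h
    have : supE L = 0 := by
      apply le_antisymm _ zero_le
      apply supE_le
      intro x hx
      simp [h x hx]
    have : elast L = 0 := by simp [elast, this, ENNReal.zero_div]
    rw [hacc] at this
    exact hρ0 this
  obtain ⟨x0, hx0, hx0ne⟩ := hLnz
  have h0L : (0 : ℕ) ∉ L := fun h0 => no_zero hF hfin hL h0 hx0 hx0ne
  have hLne : L.Nonempty := ⟨x0, hx0⟩
  set n := sInf L with hn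
  have hnL : n ∈ L := Nat.sInf_mem hLne
  have hn0 : n ≠ 0 := fun h => h0L (h ▸ hnL)
  have hnE0 : (n : ℝ≥0∞) ≠ 0 := by exact_mod_cast hn0
  have hnEtop : (n : ℝ≥0∞) ≠ ⊤ := ENNReal.natCast_ne_top n
  -- infE (L \ {0}) = n
  have hdiff : L \ {0} = L := Set.diff_singleton_eq_self h0L
  have hinf : infE (L \ {0}) = (n : ℝ≥0∞) := by
    rw [hdiff]
    refine le_antisymm (infE_le hnL) (le_infE fun x hx => ?_)
    exact_mod_cast Nat.sInf_le hx
  -- supE L = ρ * n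
  have hsupE : supE L = ρ * n := by
    have : supE L / (n : ℝ≥0∞) = ρ := by rw [← hacc, elast, hinf]
    rw [← this, ENNReal.div_mul_cancel hnE0 hnEtop]
  have hsuptop : supE L ≠ ⊤ := by
    rw [hsupE]
    exact ENNReal.mul_ne_top hρtop hnEtop
  -- L bounded above; M := sSup L
  have hbdd : BddAbove L := by
    obtain ⟨N, hN⟩ := ENNReal.exists_nat_gt hsuptop
    refine ⟨N, fun x hx => ?_⟩
    have := (le_supE hx).trans hN.le
    exact_mod_cast this
  set M := sSup L with hM
  have hML : M ∈ L := Nat.sSup_mem hLne hbdd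
  have hsupM : supE L = (M : ℝ≥0∞) := by
    refine le_antisymm (supE_le fun x hx => ?_) (le_supE hML)
    exact_mod_cast le_csSup hbdd hx
  have hMρ : (M : ℝ≥0∞) = ρ * n := by rw [← hsupM, hsupE]
  have hM0 : M ≠ 0 := fun h => h0L (h ▸ hML)
  refine ⟨M, by rw [hMρ, mul_comm], ?_⟩
  intro k hk
  have hk0 : k ≠ 0 := hk.ne'
  have hnk0 : n * k ≠ 0 := by positivity
  have hnkE0 : ((n * k : ℕ) : ℝ≥0∞) ≠ 0 := by exact_mod_cast hnk0
  have hnkEtop : ((n * k : ℕ) : ℝ≥0∞) ≠ ⊤ := ENNReal.natCast_ne_top _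
  -- the witness set L_k containing nfold k L
  obtain ⟨Lk, hLk, hsubk⟩ := exists_nfold_subset hF hL (k - 1)
  have hkk : k - 1 + 1 = k := Nat.succ_pred_eq_of_pos hk
  rw [hkk] at hsubk
  have hnkLk : n * k ∈ Lk := by
    have := mem_nfold_mul hnL k
    rw [mul_comm] at this
    exact hsubk this
  have hMkLk : M * k ∈ Lk := by
    have := mem_nfold_mul hML k
    rw [mul_comm] at this
    exact hsubk this
  have hUUmem : ∀ {j y : ℕ}, y ∈ UU F j ↔ ∃ L' ∈ F, j ∈ L' ∧ y ∈ L' := by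
    intro j y
    simp only [UU, Set.mem_iUnion, Set.mem_setOf_eq, exists_prop]
    constructor
    · rintro ⟨L', ⟨h1', h2'⟩, h3'⟩; exact ⟨L', h1', h2', h3'⟩
    · rintro ⟨L', h1', h2', h3'⟩; exact ⟨L', ⟨h1', h2'⟩, h3'⟩
  -- key upper bound: any element of a set containing j is ≤ j * ρ
  have hub : ∀ {L' : Set ℕ} (_ : L' ∈ F) {j x : ℕ} (_ : j ∈ L') (_ : x ∈ L') (_ : j ≠ 0),
      (x : ℝ≥0∞) ≤ ρ * j := by
    intro L' hL' j x hj hx hj0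
    have := (elast_ge hx hj hj0).trans (elast_le_fam hL')
    rw [ENNReal.div_le_iff (by exact_mod_cast hj0) (ENNReal.natCast_ne_top j)] at this
    rwa [← hρ] at this
  constructor
  · -- USupE F (n*k) = (n*k) * ρ
    refine le_antisymm ?_ ?_
    · apply supE_le
      intro x hx
      obtain ⟨L', hL', hj, hxm⟩ := hUUmem.1 hx
      calc (x : ℝ≥0∞) ≤ ρ * (n * k : ℕ) := hub hL' hj hxm hnk0
        _ = ((n * k : ℕ) : ℝ≥0∞) * ρ := mul_comm _ _
    · have hmem : M * k ∈ UU F (n * k) := hUUmem.2 ⟨Lk, hLk, hnkLk, hMkLk⟩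
      have := le_supE hmem
      refine le_trans (le_of_eq ?_) this
      push_cast
      rw [hMρ]; ring
  · -- UInfE F (M*k) = n*k
    refine le_antisymm ?_ ?_
    · have hmem : n * k ∈ UU F (M * k) := hUUmem.2 ⟨Lk, hLk, hMkLk, hnkLk⟩
      exact infE_le hmem
    · apply le_infE
      intro y hy
      obtain ⟨L', hL', hj, hym⟩ := hUUmem.1 hy
      have hy0 : y ≠ 0 := by
        rintro rfl
        exact no_zero hF hfin hL' hym hj (by positivity)
      have h2 : ((M * k : ℕ) : ℝ≥0∞) ≤ ρ * y := hub hL' hym hj hy0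
      have h3 : ρ * ((n * k : ℕ) : ℝ≥0∞) ≤ ρ * y := by
        refine le_trans (le_of_eq ?_) h2
        push_cast
        rw [hMρ]; ring
      exact (ENNReal.mul_le_mul_iff_right hρ0 hρtop).1 h3
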